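/- Let ω satisfy ∂ₜω − curl(u×ω) = μρ⁻¹Δω + ∇(ρ⁻¹) × (μΔu − ∇(ϖ + ½|u|²)) and ρ satisfy the continuity equation ∂ₜρ + div(ρu) = 0 with ρ > 0. Then q = ω·∇(ln ρ) satisfies ∂ₜq + div(qu) + div( μ Δu × ∇(ρ⁻¹) + ω div u ) = 0. -/

import Mathlib

noncomputable section

/-- Space: ℝ³ as functions `Fin 3 → ℝ`. -/
abbrev V : Type := Fin 3 → ℝ

/-- Standard basis vector. -/
def e3 (i : Fin 3) : V := fun j => if j = i then 1 else 0

/-- Partial derivative in direction `i`. -/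
def pd (i : Fin 3) (f : V → ℝ) (x : V) : ℝ := fderiv ℝ f x (e3 i)

/-- Gradient. -/
def grad3 (f : V → ℝ) (x : V) : V := fun i => pd i f x

/-- Divergence. -/
def div3 (v : V → V) (x : V) : ℝ := ∑ i, pd i (fun y => v y i) x

/-- Curl. -/
def curl3 (v : V → V) (x : V) : V :=
  ![pd 1 (fun y => v y 2) x - pd 2 (fun y => v y 1) x,
    pd 2 (fun y => v y 0) x - pd 0 (fun y => v y 2) x,
    pd 0 (fun y => v y 1) x - pd 1 (fun y => v y 0) x]

/-- Cross product on ℝ³. -/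
def cross3 (a b : V) : V :=
  ![a 1 * b 2 - a 2 * b 1, a 2 * b 0 - a 0 * b 2, a 0 * b 1 - a 1 * b 0]

/-- Dot product. -/
def dot3 (a b : V) : ℝ := ∑ i, a i * b i

/-- Scalar Laplacian. -/
def lap3 (f : V → ℝ) (x : V) : ℝ := ∑ i, pd i (fun y => pd i f y) x

/-- Componentwise (vector) Laplacian. -/
def vlap3 (v : V → V) (x : V) : V := fun i => lap3 (fun y => v y i) x

/-- Directional derivative `(a·∇)b`. -/
def dirD (a b : V → V) (x : V) : V := fun i => dot3 (a x) (grad3 (fun y => b y i) x)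

/-- Time derivative of a time-dependent scalar field. -/
def tder (f : ℝ → V → ℝ) (t : ℝ) (x : V) : ℝ := deriv (fun s => f s x) t

/-- Time derivative of a time-dependent vector field. -/
def tderV (v : ℝ → V → V) (t : ℝ) (x : V) : V := fun i => deriv (fun s => v s x i) t

/-- Material derivative of a scalar: `∂ₜ f + u·∇f`. -/
def matD (u : ℝ → V → V) (f : ℝ → V → ℝ) (t : ℝ) (x : V) : ℝ :=
  tder f t x + dot3 (u t x) (grad3 (f t) x)

/-- Material derivative of a vector field, componentwise. -/
def matDV (u v : ℝ → V → V) (t : ℝ) (x : V) : V :=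
  fun i => tderV v t x i + dot3 (u t x) (grad3 (fun y => v t y i) x)

/-- The perpendicular gradient `∇⊥θ = (∂_y θ, −∂_x θ, 0)`. -/
def gradPerp (f : V → ℝ) (x : V) : V := ![pd 1 f x, -(pd 0 f x), 0]

open Real


section basic
variable {E : Type*} [NormedAddCommGroup E] [NormedSpace ℝ E]

-- fderiv of (fun p => fderiv F p a) as second derivative, and symmetry
theorem fderiv_clm_const_apply {F : E → ℝ} (hF : ContDiff ℝ (⊤ : ℕ∞) F) (a b : E) (q : E) :
    fderiv ℝ (fun p => fderiv ℝ F p a) q b = fderiv ℝ (fderiv ℝ F) q b a := by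
  have h1 : (fun p => fderiv ℝ F p a) = (ContinuousLinearMap.apply ℝ ℝ a) ∘ (fderiv ℝ F) := rfl
  rw [h1, fderiv_comp q (ContinuousLinearMap.differentiableAt _)
    ((hF.fderiv_right (m := (⊤ : ℕ∞)) (by simp)).differentiable (by simp) q)]
  simp

theorem fderiv_swap {F : E → ℝ} (hF : ContDiff ℝ (⊤ : ℕ∞) F) (a b : E) (q : E) :
    fderiv ℝ (fun p => fderiv ℝ F p a) q b = fderiv ℝ (fun p => fderiv ℝ F p b) q a := by
  rw [fderiv_clm_const_apply hF, fderiv_clm_const_apply hF]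
  exact ((hF.contDiffAt).isSymmSndFDerivAt (by simp; exact WithTop.coe_le_coe.mpr le_top)) b a

theorem contDiff_fderiv_apply {F : E → ℝ} (hF : ContDiff ℝ (⊤ : ℕ∞) F) (a : E) :
    ContDiff ℝ (⊤ : ℕ∞) (fun p => fderiv ℝ F p a) :=
  (hF.fderiv_right (by simp)).clm_apply contDiff_const

end basic

-- spatial pd lemmas
theorem pd_comm {g : V → ℝ} (hg : ContDiff ℝ (⊤ : ℕ∞) g) (i j : Fin 3) (x : V) :
    pd i (fun y => pd j g y) x = pd j (fun y => pd i g y) x := by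
  simp only [pd]
  exact fderiv_swap hg (e3 j) (e3 i) x

theorem contDiff_pd {g : V → ℝ} (hg : ContDiff ℝ (⊤ : ℕ∞) g) (j : Fin 3) :
    ContDiff ℝ (⊤ : ℕ∞) (fun y => pd j g y) := contDiff_fderiv_apply hg (e3 j)

-- slices of joint function
section joint
variable {F : ℝ × V → ℝ} (hF : ContDiff ℝ (⊤ : ℕ∞) F)
include hF

theorem contDiff_slice (t : ℝ) : ContDiff ℝ (⊤ : ℕ∞) (fun y => F (t, y)) :=
  hF.comp (contDiff_const.prodMk contDiff_id)

theorem contDiff_tslice (x : V) : ContDiff ℝ (⊤ : ℕ∞) (fun s => F (s, x)) :=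
  hF.comp (contDiff_id.prodMk contDiff_const)

theorem pd_slice (t : ℝ) (x : V) (i : Fin 3) :
    pd i (fun y => F (t, y)) x = fderiv ℝ F (t, x) (0, e3 i) := by
  have h : HasFDerivAt (fun y : V => (t, y)) (ContinuousLinearMap.inr ℝ ℝ V) x :=
    (hasFDerivAt_prodMk_right t x)
  have h2 : HasFDerivAt (fun y => F (t, y))
      ((fderiv ℝ F (t, x)).comp (ContinuousLinearMap.inr ℝ ℝ V)) x :=
    (hF.differentiable (by simp) (t, x)).hasFDerivAt.comp x h
  rw [pd, h2.fderiv]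
  simp

theorem deriv_tslice (t : ℝ) (x : V) :
    deriv (fun s => F (s, x)) t = fderiv ℝ F (t, x) (1, 0) := by
  have h : HasFDerivAt (fun s : ℝ => (s, x)) (ContinuousLinearMap.inl ℝ ℝ V) t :=
    (hasFDerivAt_prodMk_left t x)
  have h2 : HasFDerivAt (fun s => F (s, x))
      ((fderiv ℝ F (t, x)).comp (ContinuousLinearMap.inl ℝ ℝ V)) t :=
    (hF.differentiable (by simp) (t, x)).hasFDerivAt.comp t h
  rw [h2.hasDerivAt.deriv]
  simp

theorem pd_deriv_swap (t : ℝ) (x : V) (i : Fin 3) :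
    pd i (fun y => deriv (fun s => F (s, y)) t) x
      = deriv (fun s => pd i (fun y => F (s, y)) x) t := by
  have e1 : (fun y => deriv (fun s => F (s, y)) t) = fun y => fderiv ℝ F (t, y) (1, 0) := by
    funext y; exact deriv_tslice hF t y
  rw [e1, pd_slice (contDiff_fderiv_apply hF (1,0)) t x i]
  have e2 : (fun s => pd i (fun y => F (s, y)) x) = fun s => fderiv ℝ F (s, x) (0, e3 i) := by
    funext s; exact pd_slice hF s x i
  rw [e2, deriv_tslice (contDiff_fderiv_apply hF (0, e3 i)) t x]
  exact fderiv_swap hF (1,0) (0, e3 i) (t, x)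

end joint

-- arithmetic rules for pd
section arith
variable {f g : V → ℝ} {x : V} {i : Fin 3}

theorem pd_add' (hf : DifferentiableAt ℝ f x) (hg : DifferentiableAt ℝ g x) :
    pd i (fun y => f y + g y) x = pd i f x + pd i g x := by
  simp [pd, fderiv_fun_add hf hg]

theorem pd_sub' (hf : DifferentiableAt ℝ f x) (hg : DifferentiableAt ℝ g x) :
    pd i (fun y => f y - g y) x = pd i f x - pd i g x := by
  simp [pd, fderiv_fun_sub hf hg]

theorem pd_neg' : pd i (fun y => -f y) x = -pd i f x := by
  simp [pd, fderiv_neg]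

theorem pd_mul' (hf : DifferentiableAt ℝ f x) (hg : DifferentiableAt ℝ g x) :
    pd i (fun y => f y * g y) x = pd i f x * g x + f x * pd i g x := by
  simp [pd, fderiv_fun_mul hf hg]; ring

theorem pd_const (c : ℝ) : pd i (fun _ => c) x = 0 := by simp [pd]

theorem pd_inv' (hf : DifferentiableAt ℝ f x) (hne : f x ≠ 0) :
    pd i (fun y => (f y)⁻¹) x = -((f x)⁻¹ * (f x)⁻¹ * pd i f x) := by
  have h1 : HasDerivAt (fun z : ℝ => z⁻¹) (-((f x)^2)⁻¹) (f x) := hasDerivAt_inv hne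
  have h2 : HasFDerivAt (fun y => (f y)⁻¹) (-((f x)^2)⁻¹ • fderiv ℝ f x) x :=
    h1.comp_hasFDerivAt x hf.hasFDerivAt
  simp only [pd, h2.fderiv, ContinuousLinearMap.coe_smul', Pi.smul_apply, smul_eq_mul, pow_two,
    mul_inv]
  ring

theorem pd_log' (hf : DifferentiableAt ℝ f x) (hne : f x ≠ 0) :
    pd i (fun y => Real.log (f y)) x = (f x)⁻¹ * pd i f x := by
  have h := (hf.hasFDerivAt.log hne).fderiv
  simp only [pd, h]
  simp [div_eq_inv_mul]

end arith

-- oriented second-derivative swaps for normalization (function-level)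
theorem pd_swap10 (f : V → ℝ) (hf : ContDiff ℝ (⊤ : ℕ∞) f) :
    pd 1 (pd 0 f) = pd 0 (pd 1 f) := funext fun x => pd_comm hf 1 0 x
theorem pd_swap20 (f : V → ℝ) (hf : ContDiff ℝ (⊤ : ℕ∞) f) :
    pd 2 (pd 0 f) = pd 0 (pd 2 f) := funext fun x => pd_comm hf 2 0 x
theorem pd_swap21 (f : V → ℝ) (hf : ContDiff ℝ (⊤ : ℕ∞) f) :
    pd 2 (pd 1 f) = pd 1 (pd 2 f) := funext fun x => pd_comm hf 2 1 x

set_option maxHeartbeats 16000000 in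
/-- compressible Navier–Stokes, 2nd projection `q = ω·∇(ln ρ)`:
`∂ₜq + div(qu) + div(μ Δu × ∇(ρ⁻¹) + ω div u) = 0`. -/
theorem stmt17 (u ω : ℝ → V → V) (ρ ϖ : ℝ → V → ℝ) (μ : ℝ)
    (hu : ContDiff ℝ (⊤ : ℕ∞) (fun p : ℝ × V => u p.1 p.2))
    (hρ : ContDiff ℝ (⊤ : ℕ∞) (fun p : ℝ × V => ρ p.1 p.2))
    (hϖ : ContDiff ℝ (⊤ : ℕ∞) (fun p : ℝ × V => ϖ p.1 p.2))
    (hρpos : ∀ t x, 0 < ρ t x)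
    (hω : ∀ t x, ω t x = curl3 (u t) x)
    (hωeq : ∀ t x, tderV ω t x - curl3 (fun y => cross3 (u t y) (ω t y)) x =
      (μ * (ρ t x)⁻¹) • vlap3 (ω t) x +
      cross3 (grad3 (fun y => (ρ t y)⁻¹) x)
        (μ • vlap3 (u t) x -
          grad3 (fun y => ϖ t y + (1 / 2) * dot3 (u t y) (u t y)) x))
    (hcont : ∀ t x, tder ρ t x + div3 (fun y => ρ t y • u t y) x = 0)
    (q : ℝ → V → ℝ)
    (hq : ∀ t x, q t x = dot3 (ω t x) (grad3 (fun y => Real.log (ρ t y)) x)) :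
    ∀ t x, tder q t x + div3 (fun y => q t y • u t y) x +
      div3 (fun y => μ • cross3 (vlap3 (u t) y) (grad3 (fun z => (ρ t z)⁻¹) y) +
        div3 (u t) y • ω t y) x = 0 := by
  intro t x
  -- smoothness of components
  have hU : ∀ i : Fin 3, ContDiff ℝ (⊤ : ℕ∞) (fun p : ℝ × V => u p.1 p.2 i) := fun i =>
    (contDiff_pi.mp hu) i
  have hUs : ∀ (s : ℝ) (i : Fin 3), ContDiff ℝ (⊤ : ℕ∞) (fun y => u s y i) :=
    fun s i => contDiff_slice (hU i) s
  have hRs : ∀ s : ℝ, ContDiff ℝ (⊤ : ℕ∞) (fun y => ρ s y) := fun s => contDiff_slice hρ s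
  have hPs : ContDiff ℝ (⊤ : ℕ∞) (fun y => ϖ t y) := contDiff_slice hϖ t
  have hCUd : ∀ (k i : Fin 3), ContDiff ℝ (⊤ : ℕ∞) (fun y => pd k (fun z => u t z i) y) :=
    fun k i => contDiff_pd (hUs t i) k
  have hCUdd : ∀ (j k i : Fin 3),
      ContDiff ℝ (⊤ : ℕ∞) (fun y => pd j (fun z => pd k (fun w => u t w i) z) y) :=
    fun j k i => contDiff_pd (hCUd k i) j
  have hCRd : ∀ k : Fin 3, ContDiff ℝ (⊤ : ℕ∞) (fun y => pd k (fun z => ρ t z) y) :=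
    fun k => contDiff_pd (hRs t) k
  have dU : ∀ i : Fin 3, Differentiable ℝ (fun y => u t y i) :=
    fun i => (hUs t i).differentiable (by simp)
  have dUd : ∀ (k i : Fin 3), Differentiable ℝ (fun y => pd k (fun z => u t z i) y) :=
    fun k i => (hCUd k i).differentiable (by simp)
  have dUdd : ∀ (j k i : Fin 3),
      Differentiable ℝ (fun y => pd j (fun z => pd k (fun w => u t w i) z) y) :=
    fun j k i => (hCUdd j k i).differentiable (by simp)
  have dR : Differentiable ℝ (fun y => ρ t y) := (hRs t).differentiable (by simp)
  have dRd : ∀ k : Fin 3, Differentiable ℝ (fun y => pd k (fun z => ρ t z) y) :=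
    fun k => (hCRd k).differentiable (by simp)
  have dP : Differentiable ℝ (fun y => ϖ t y) := hPs.differentiable (by simp)
  have hne : ∀ s y, ρ s y ≠ 0 := fun s y => (hρpos s y).ne'
  -- time-direction differentiability facts
  have dpdu : ∀ (a b : Fin 3), DifferentiableAt ℝ (fun s => pd a (fun y => u s y b) x) t := by
    intro a b
    have he : (fun s => pd a (fun y => u s y b) x)
        = fun s => fderiv ℝ (fun p : ℝ × V => u p.1 p.2 b) (s, x) (0, e3 a) :=
      funext fun s => pd_slice (hU b) s x a
    rw [he]
    exact ((contDiff_tslice (contDiff_fderiv_apply (hU b) (0, e3 a)) x).differentiable (by simp)) t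
  have dω : ∀ j : Fin 3, DifferentiableAt ℝ (fun s => ω s x j) t := by
    intro j
    have he : (fun s => ω s x j) = fun s => curl3 (u s) x j := funext fun s => by rw [hω]
    rw [he]
    fin_cases j <;>
      simp only [curl3, Matrix.cons_val_zero, Matrix.cons_val_one, Matrix.head_cons,
        Matrix.cons_val_two, Matrix.tail_cons, Fin.isValue] <;>
      exact (dpdu _ _).sub (dpdu _ _)
  have ha : ∀ j : Fin 3, HasDerivAt (fun s => ω s x j) (tderV ω t x j) t := fun j =>
    (dω j).hasDerivAt
  have dρt : DifferentiableAt ℝ (fun s => ρ s x) t :=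
    ((contDiff_tslice hρ x).differentiable (by simp)) t
  have hc : HasDerivAt (fun s => (ρ s x)⁻¹) (-(tder ρ t x) / (ρ t x) ^ 2) t :=
    dρt.hasDerivAt.inv (hne t x)
  have hb : ∀ j : Fin 3, HasDerivAt (fun s => pd j (fun y => ρ s y) x)
      (pd j (fun y => tder ρ t y) x) t := by
    intro j
    have he : (fun s => pd j (fun y => ρ s y) x)
        = fun s => fderiv ℝ (fun p : ℝ × V => ρ p.1 p.2) (s, x) (0, e3 j) :=
      funext fun s => pd_slice hρ s x j
    have hd : DifferentiableAt ℝ (fun s => pd j (fun y => ρ s y) x) t := by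
      rw [he]
      exact ((contDiff_tslice (contDiff_fderiv_apply hρ (0, e3 j)) x).differentiable (by simp)) t
    have hv : deriv (fun s => pd j (fun y => ρ s y) x) t = pd j (fun y => tder ρ t y) x :=
      (pd_deriv_swap hρ t x j).symm
    rw [← hv]
    exact hd.hasDerivAt
  -- q as explicit formula in time
  have hq1 : (fun s => q s x) = fun s =>
      ω s x 0 * ((ρ s x)⁻¹ * pd 0 (fun y => ρ s y) x) +
      ω s x 1 * ((ρ s x)⁻¹ * pd 1 (fun y => ρ s y) x) +
      ω s x 2 * ((ρ s x)⁻¹ * pd 2 (fun y => ρ s y) x) := by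
    funext s
    have dRs : Differentiable ℝ (fun y => ρ s y) := (hRs s).differentiable (by simp)
    rw [hq]
    simp only [dot3, grad3, Fin.sum_univ_three, pd_log' (dRs x) (hne s x)]
  have H : HasDerivAt (fun s => q s x)
      (tderV ω t x 0 * ((ρ t x)⁻¹ * pd 0 (fun y => ρ t y) x) +
        ω t x 0 * (-(tder ρ t x) / ρ t x ^ 2 * pd 0 (fun y => ρ t y) x +
          (ρ t x)⁻¹ * pd 0 (fun y => tder ρ t y) x) +
       (tderV ω t x 1 * ((ρ t x)⁻¹ * pd 1 (fun y => ρ t y) x) +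
        ω t x 1 * (-(tder ρ t x) / ρ t x ^ 2 * pd 1 (fun y => ρ t y) x +
          (ρ t x)⁻¹ * pd 1 (fun y => tder ρ t y) x)) +
       (tderV ω t x 2 * ((ρ t x)⁻¹ * pd 2 (fun y => ρ t y) x) +
        ω t x 2 * (-(tder ρ t x) / ρ t x ^ 2 * pd 2 (fun y => ρ t y) x +
          (ρ t x)⁻¹ * pd 2 (fun y => tder ρ t y) x))) t := by
    rw [hq1]
    exact (((ha 0).mul (hc.mul (hb 0))).add ((ha 1).mul (hc.mul (hb 1)))).add
      ((ha 2).mul (hc.mul (hb 2)))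
  have hT1 : tder q t x = _ := H.deriv
  have hq2 : ∀ y, q t y =
      (pd 1 (fun z => u t z 2) y - pd 2 (fun z => u t z 1) y) *
        ((ρ t y)⁻¹ * pd 0 (fun z => ρ t z) y) +
      (pd 2 (fun z => u t z 0) y - pd 0 (fun z => u t z 2) y) *
        ((ρ t y)⁻¹ * pd 1 (fun z => ρ t z) y) +
      (pd 0 (fun z => u t z 1) y - pd 1 (fun z => u t z 0) y) *
        ((ρ t y)⁻¹ * pd 2 (fun z => ρ t z) y) := by
    intro y
    rw [hq, hω]
    simp only [dot3, grad3, curl3, Fin.sum_univ_three, Matrix.cons_val_zero,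
      Matrix.cons_val_one, Matrix.head_cons, Matrix.cons_val_two, Matrix.tail_cons,
      pd_log' (dR y) (hne t y)]
  have hW : ∀ j : Fin 3, tderV ω t x j =
      curl3 (fun y => cross3 (u t y) (ω t y)) x j +
      ((μ * (ρ t x)⁻¹) • vlap3 (ω t) x) j +
      (cross3 (grad3 (fun y => (ρ t y)⁻¹) x)
        (μ • vlap3 (u t) x -
          grad3 (fun y => ϖ t y + 1 / 2 * dot3 (u t y) (u t y)) x)) j := by
    intro j
    have h := congrFun (hωeq t x) j
    simp only [Pi.sub_apply, Pi.add_apply] at h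
    linarith
  have hRt : tder ρ t x = -div3 (fun y => ρ t y • u t y) x := by
    have h := hcont t x; linarith
  have hMt : (fun y => tder ρ t y) = fun y => -div3 (fun z => ρ t z • u t z) y := by
    funext y; have h := hcont t y; linarith
  rw [hT1, hMt, hRt, hW 0, hW 1, hW 2]
  simp only [hω, hq2, div3, grad3, curl3, cross3, dot3, lap3, vlap3, Pi.add_apply,
    Pi.smul_apply, Pi.sub_apply, Pi.neg_apply, smul_eq_mul, Fin.sum_univ_three,
    Matrix.cons_val_zero, Matrix.cons_val_one, Matrix.head_cons, Matrix.cons_val_two,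
    Matrix.tail_cons]
  simp (disch := first | exact hne t _ | fun_prop (disch := exact hne t _)) only
    [pd_add', pd_sub', pd_mul', pd_neg', pd_inv', pd_const]
  simp (disch := first | exact hRs t | exact hUs t _ | exact hCUd _ _ | exact hCRd _) only
    [pd_swap10, pd_swap20, pd_swap21]
  simp only [div_eq_mul_inv, ← inv_pow]
  set v := (ρ t x)⁻¹ with hv
  have hvne : v ≠ 0 := by rw [hv]; exact inv_ne_zero (hne t x)
  have hrv : ρ t x = v⁻¹ := by rw [hv, inv_inv]
  rw [hrv]
  field_simp
  ring
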